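/- arXiv:2105.12982 — 4 statements merged into one kernel-verified Lean document; each statement's English description precedes it below -/
import Mathlib

section
/- For every congestion game, Rosenthal's potential is an exact potential function: for every strategy profile s ∈ S₁×⋯×Sₙ, every player i ∈ N, and every alternative strategy s_i' ∈ S_i, it holds that Φ(s) − Φ(s_i', s_{−i}) = C_i(s) − C_i(s_i', s_{−i}), where (s_i', s_{−i}) denotes the profile obtained from s by replacing the i-th coordinate with s_i'. -/
open Finset

/-- The load of resource `e` under strategy profile `s`: the number of players using `e`. -/
def resourceLoad {n : ℕ} {E : Type*} [DecidableEq E] (s : Fin n → Finset E) (e : E) : ℕ :=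
  (Finset.univ.filter fun i => e ∈ s i).card

/-- Rosenthal's potential `Φ(s) = Σ_{e ∈ E} Σ_{k=1}^{ℓ_e(s)} c_e(k)`. -/
noncomputable def rosenthalPotential {n : ℕ} {E : Type*} [Fintype E] [DecidableEq E]
    (c : E → ℕ → ℝ) (s : Fin n → Finset E) : ℝ :=
  ∑ e : E, ∑ k ∈ Finset.Icc 1 (resourceLoad s e), c e k

/-- Player `i`'s cost `C_i(s) = Σ_{e ∈ s_i} c_e(ℓ_e(s))`. -/
noncomputable def playerCost {n : ℕ} {E : Type*} [DecidableEq E]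
    (c : E → ℕ → ℝ) (s : Fin n → Finset E) (i : Fin n) : ℝ :=
  ∑ e ∈ s i, c e (resourceLoad s e)

/-!
Removing player `i` (letting it play `∅`) lowers the load of each resource `e ∈ s i` by one,
so it removes exactly the top term `c_e(ℓ_e(s))` of the inner sum of `Φ`, which is what player `i`
pays on `e`. Hence `Φ(s) = Φ(∅, s₋ᵢ) + C_i(s)`, and the first summand does not depend on `s i`.
-/

theorem Finset.sum_Icc_one_add_ite {M : Type*} [AddCommMonoid M] (f : ℕ → M) (m : ℕ)
    (p : Prop) [Decidable p] :
    ∑ k ∈ Icc 1 (m + if p then 1 else 0), f k = ∑ k ∈ Icc 1 m, f k + if p then f (m + 1) else 0 := by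
  split_ifs
  · exact sum_Icc_succ_top (Nat.le_add_left 1 m) f
  · simp

section

variable {n : ℕ} {E : Type*} [DecidableEq E]

theorem resourceLoad_update_empty_add (s : Fin n → Finset E) (i : Fin n) (e : E) :
    resourceLoad (Function.update s i ∅) e + (if e ∈ s i then 1 else 0) = resourceLoad s e := by
  simp only [resourceLoad, card_filter, ← add_sum_erase _ _ (mem_univ i), Function.update_self,
    notMem_empty, if_false, zero_add]
  rw [add_comm]
  congr 1
  refine sum_congr rfl fun j hj => ?_
  rw [Function.update_of_ne (ne_of_mem_erase hj)]

theorem playerCost_eq_sum_resourceLoad_update_empty (c : E → ℕ → ℝ) (s : Fin n → Finset E)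
    (i : Fin n) :
    playerCost c s i = ∑ e ∈ s i, c e (resourceLoad (Function.update s i ∅) e + 1) := by
  refine sum_congr rfl fun e he => ?_
  rw [← resourceLoad_update_empty_add s i e, if_pos he]

theorem rosenthalPotential_update_empty_add_playerCost [Fintype E] (c : E → ℕ → ℝ)
    (s : Fin n → Finset E) (i : Fin n) :
    rosenthalPotential c (Function.update s i ∅) + playerCost c s i = rosenthalPotential c s := by
  simp only [rosenthalPotential, ← resourceLoad_update_empty_add s i, sum_Icc_one_add_ite,
    sum_add_distrib, ← sum_filter, filter_mem_eq_inter, univ_inter,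
    playerCost_eq_sum_resourceLoad_update_empty]

end

theorem rosenthal_exact_potential_general {n : ℕ} {E : Type*} [Fintype E] [DecidableEq E]
    (c : E → ℕ → ℝ) (s : Fin n → Finset E) (i : Fin n) (t : Finset E) :
    rosenthalPotential c s - rosenthalPotential c (Function.update s i t)
      = playerCost c s i - playerCost c (Function.update s i t) i := by
  rw [← rosenthalPotential_update_empty_add_playerCost c s i,
    ← rosenthalPotential_update_empty_add_playerCost c (Function.update s i t) i,
    Function.update_idem]
  exact add_sub_add_left_eq_sub _ _ _

/-- Rosenthal's potential is an exact potential function: for every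
congestion game, every strategy profile `s`, every player `i`, and every alternative
strategy `t ∈ S i`, one has `Φ(s) − Φ(t, s₋ᵢ) = C_i(s) − C_i(t, s₋ᵢ)`. -/
theorem rosenthal_exact_potential {n : ℕ} {E : Type*} [Fintype E] [DecidableEq E]
    (c : E → ℕ → ℝ) (S : Fin n → Finset (Finset E)) (hSne : ∀ i, (S i).Nonempty)
    (s : Fin n → Finset E) (hs : ∀ i, s i ∈ S i)
    (i : Fin n) (t : Finset E) (ht : t ∈ S i) :
    rosenthalPotential c s - rosenthalPotential c (Function.update s i t)
      = playerCost c s i - playerCost c (Function.update s i t) i :=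
  rosenthal_exact_potential_general c s i t
end

section
/- Let m ∈ ℕ, u ∈ ℕ^m, K ∈ ℕ with K ≥ 1, K₂ ≥ 0 a real number, and L(k,u) = {α ∈ ℕ^m : α_j ≤ u_j for all j, and Σ_j α_j = K}. Let c_j : ℕ → ℝ (j = 1,…,m) be non-decreasing cost functions, T ≥ 0, Φ̄(α) = Σ_{j=1}^m Σ_{t=1}^{α_j} c_j(t), and define ν : L(k,u) → ℝ by ν(α) = −((K₂/K²)·Σ_{j=1}^m α_j(α_j − 1) + T·Φ̄(α)). Then ν is M-concave on L(k,u): for all α, β ∈ L(k,u) and every index i with α_i > β_i, there exists an index j with α_j < β_j such that α − e_i + e_j ∈ L(k,u), β + e_i − e_j ∈ L(k,u), and ν(α) + ν(β) ≤ ν(α − e_i + e_j) + ν(β + e_i − e_j). -/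
/-!
`ν` is separable, `ν(α) = Σ_l g_l(α_l)`, and each `g_l` is discretely concave: its increments
`g_l(x+1) − g_l(x) = −(2(K₂/K²)x + T·c_l(x+1))` are non-increasing because `c_l` is non-decreasing.
For `α_i > β_i` any `j` with `α_j < β_j` works (one exists as both sums equal `K`): moving a unit
from `i` to `j` in `α` and back in `β` changes `ν(α) + ν(β)` by a sum of two differences of
increments, each non-negative by concavity, while `α_j < β_j ≤ u_j` and `β_i < α_i ≤ u_i` keep
both moved profiles below `u`.
-/

open Finset

/-- `exchangeMove α i j = α − e_i + e_j`. -/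
def exchangeMove {m : ℕ} (α : Fin m → ℕ) (i j : Fin m) : Fin m → ℕ :=
  fun l => α l + (if l = j then 1 else 0) - (if l = i then 1 else 0)

/-- Rosenthal's potential on resource load profiles:
`Φ̄(α) = Σ_{j=1}^m Σ_{t=1}^{α_j} c_j(t)`. -/
noncomputable def rosenthalLoad {m : ℕ} (c : Fin m → ℕ → ℝ) (α : Fin m → ℕ) : ℝ :=
  ∑ j : Fin m, ∑ t ∈ Finset.Icc 1 (α j), c j t

/-- The function `ν(α) = −((K₂/K²)·Σ_j α_j(α_j−1) + T·Φ̄(α))`. -/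
noncomputable def nuFun {m : ℕ} (c : Fin m → ℕ → ℝ) (K : ℕ) (K₂ T : ℝ)
    (α : Fin m → ℕ) : ℝ :=
  -((K₂ / (K : ℝ) ^ 2) * (∑ j, (α j : ℝ) * ((α j : ℝ) - 1)) + T * rosenthalLoad c α)

section

variable {m : ℕ}

lemma exchangeMove_le {α u : Fin m → ℕ} (hα : ∀ l, α l ≤ u l) {i j : Fin m} (hj : α j < u j) :
    ∀ l, exchangeMove α i j l ≤ u l := by
  intro l
  have := hα l
  unfold exchangeMove
  split_ifs <;> subst_vars <;> omega

lemma sum_exchangeMove {α : Fin m → ℕ} {i : Fin m} (hi : 0 < α i) (j : Fin m) :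
    ∑ l, exchangeMove α i j l = ∑ l, α l := by
  have key : ∀ l, exchangeMove α i j l + (if l = i then 1 else 0)
      = α l + (if l = j then 1 else 0) := by
    intro l
    unfold exchangeMove
    split_ifs <;> subst_vars <;> omega
  simpa [Finset.sum_add_distrib] using Finset.sum_congr (s₁ := univ) rfl fun l _ => key l

lemma sum_comp_exchangeMove {M : Type*} [AddCommGroup M] (F : Fin m → ℕ → M) (α : Fin m → ℕ)
    {i j : Fin m} (hij : i ≠ j) :
    ∑ l, F l (exchangeMove α i j l)
      = ∑ l, F l (α l) + (F i (α i - 1) - F i (α i)) + (F j (α j + 1) - F j (α j)) := by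
  have hdiff : ∑ l, (F l (exchangeMove α i j l) - F l (α l))
      = (F i (α i - 1) - F i (α i)) + (F j (α j + 1) - F j (α j)) := by
    rw [Fintype.sum_eq_add i j hij]
    · simp [exchangeMove, hij, hij.symm]
    · rintro l ⟨hli, hlj⟩
      simp [exchangeMove, hli, hlj]
  rw [Finset.sum_sub_distrib] at hdiff
  rw [add_assoc, ← hdiff]
  abel

lemma exists_lt_of_sum_eq {α β : Fin m → ℕ} (hsum : ∑ l, α l = ∑ l, β l) {i : Fin m}
    (hi : β i < α i) : ∃ j, α j < β j := by
  by_contra! h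
  exact (Finset.sum_lt_sum (fun l _ => h l) ⟨i, Finset.mem_univ i, hi⟩).ne' hsum

lemma sum_add_sum_le_sum_exchangeMove (f : Fin m → ℕ → ℝ)
    (hf : ∀ l, Antitone fun x => f l (x + 1) - f l x) {α β : Fin m → ℕ} {i j : Fin m}
    (hi : β i < α i) (hj : α j < β j) :
    ∑ l, f l (α l) + ∑ l, f l (β l)
      ≤ ∑ l, f l (exchangeMove α i j l) + ∑ l, f l (exchangeMove β j i l) := by
  have hij : i ≠ j := by rintro rfl; omega
  have hconc_i : f i (α i) - f i (α i - 1) ≤ f i (β i + 1) - f i (β i) := by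
    simpa [Nat.sub_add_cancel (by omega : 1 ≤ α i)] using hf i (by omega : β i ≤ α i - 1)
  have hconc_j : f j (β j) - f j (β j - 1) ≤ f j (α j + 1) - f j (α j) := by
    simpa [Nat.sub_add_cancel (by omega : 1 ≤ β j)] using hf j (by omega : α j ≤ β j - 1)
  rw [sum_comp_exchangeMove f α hij, sum_comp_exchangeMove f β hij.symm]
  linarith

noncomputable def nuTerm (c : Fin m → ℕ → ℝ) (q T : ℝ) (l : Fin m) (x : ℕ) : ℝ :=
  -(q * ((x : ℝ) * ((x : ℝ) - 1)) + T * ∑ t ∈ Icc 1 x, c l t)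

lemma nuFun_eq_sum_nuTerm (c : Fin m → ℕ → ℝ) (K : ℕ) (K₂ T : ℝ) (α : Fin m → ℕ) :
    nuFun c K K₂ T α = ∑ l, nuTerm c (K₂ / (K : ℝ) ^ 2) T l (α l) := by
  unfold nuFun rosenthalLoad nuTerm
  rw [Finset.mul_sum, Finset.mul_sum, ← Finset.sum_add_distrib, ← Finset.sum_neg_distrib]

lemma nuTerm_succ_sub (c : Fin m → ℕ → ℝ) (q T : ℝ) (l : Fin m) (x : ℕ) :
    nuTerm c q T l (x + 1) - nuTerm c q T l x = -(q * (2 * (x : ℝ)) + T * c l (x + 1)) := by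
  unfold nuTerm
  rw [Finset.sum_Icc_succ_top (by omega : 1 ≤ x + 1)]
  push_cast
  ring

lemma antitone_nuTerm_succ_sub (c : Fin m → ℕ → ℝ) {q T : ℝ} (hq : 0 ≤ q) (hT : 0 ≤ T)
    (l : Fin m) (hc : ∀ t, 1 ≤ t → c l t ≤ c l (t + 1)) :
    Antitone fun x => nuTerm c q T l (x + 1) - nuTerm c q T l x := by
  have hmono : Monotone fun t => c l (t + 1) :=
    monotone_nat_of_le_succ fun t => hc (t + 1) (by omega)
  intro x y hxy
  simp only [nuTerm_succ_sub]
  have := hmono hxy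
  gcongr

end

theorem nu_M_concave_general {m : ℕ} (u : Fin m → ℕ) (K : ℕ)
    (K₂ : ℝ) (hK₂ : 0 ≤ K₂)
    (c : Fin m → ℕ → ℝ) (hc : ∀ j, ∀ t, 1 ≤ t → c j t ≤ c j (t + 1))
    (T : ℝ) (hT : 0 ≤ T) :
    ∀ α β : Fin m → ℕ,
      (∀ j, α j ≤ u j) → (∑ j, α j) = K →
      (∀ j, β j ≤ u j) → (∑ j, β j) = K →
      ∀ i : Fin m, β i < α i →
        ∃ j : Fin m, α j < β j ∧
          (∀ l, exchangeMove α i j l ≤ u l) ∧ (∑ l, exchangeMove α i j l) = K ∧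
          (∀ l, exchangeMove β j i l ≤ u l) ∧ (∑ l, exchangeMove β j i l) = K ∧
          nuFun c K K₂ T α + nuFun c K K₂ T β
            ≤ nuFun c K K₂ T (exchangeMove α i j) + nuFun c K K₂ T (exchangeMove β j i) := by
  intro α β hαu hαK hβu hβK i hi
  obtain ⟨j, hj⟩ := exists_lt_of_sum_eq (hαK.trans hβK.symm) hi
  have hq : 0 ≤ K₂ / (K : ℝ) ^ 2 := by positivity
  refine ⟨j, hj, exchangeMove_le hαu (hj.trans_le (hβu j)),
    (sum_exchangeMove (by omega) j).trans hαK, exchangeMove_le hβu (hi.trans_le (hαu i)),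
    (sum_exchangeMove (by omega) i).trans hβK, ?_⟩
  simp only [nuFun_eq_sum_nuTerm]
  exact sum_add_sum_le_sum_exchangeMove _
    (fun l => antitone_nuTerm_succ_sub c hq hT l (hc l)) hi hj

/-- with non-decreasing cost functions `c_j`, `T ≥ 0`, `K ≥ 1`, `K₂ ≥ 0`,
the function `ν(α) = −((K₂/K²)·Σ_j α_j(α_j−1) + T·Φ̄(α))` is M-concave on
`L(k,u) = {α ∈ ℕ^m : α ≤ u, Σ_j α_j = K}`: for all `α, β ∈ L(k,u)` and every `i` with
`α_i > β_i` there is `j` with `α_j < β_j` such that `α − e_i + e_j ∈ L(k,u)`,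
`β + e_i − e_j ∈ L(k,u)`, and `ν(α) + ν(β) ≤ ν(α − e_i + e_j) + ν(β + e_i − e_j)`. -/
theorem nu_M_concave {m : ℕ} (u : Fin m → ℕ) (K : ℕ) (hK : 1 ≤ K)
    (K₂ : ℝ) (hK₂ : 0 ≤ K₂)
    (c : Fin m → ℕ → ℝ) (hc : ∀ j, ∀ t, 1 ≤ t → c j t ≤ c j (t + 1))
    (T : ℝ) (hT : 0 ≤ T) :
    ∀ α β : Fin m → ℕ,
      (∀ j, α j ≤ u j) → (∑ j, α j) = K →
      (∀ j, β j ≤ u j) → (∑ j, β j) = K →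
      ∀ i : Fin m, β i < α i →
        ∃ j : Fin m, α j < β j ∧
          (∀ l, exchangeMove α i j l ≤ u l) ∧ (∑ l, exchangeMove α i j l) = K ∧
          (∀ l, exchangeMove β j i l ≤ u l) ∧ (∑ l, exchangeMove β j i l) = K ∧
          nuFun c K K₂ T α + nuFun c K K₂ T β
            ≤ nuFun c K K₂ T (exchangeMove α i j) + nuFun c K K₂ T (exchangeMove β j i) :=
  nu_M_concave_general u K K₂ hK₂ c hc T hT
end

section
/- Let n, d ∈ ℕ and let R ⊆ {α ∈ ℕ^n : α_i ≤ d for all i} be a discrete polymatroid, i.e.: (i) the zero vector is in R; (ii) if y ∈ R and x ≤ y (coordinatewise) then x ∈ R; (iii) if x, y ∈ R with Σ_i x_i < Σ_i y_i, then there exists w ∈ R with x < w ≤ x ∨ y (coordinatewise maximum; x < w means x ≤ w and x ≠ w). For I ⊆ [n]×[d], define α(I) ∈ ℕ^n by α(I)_i = |{j ∈ [d] : (i,j) ∈ I}|. Then the family 𝕀 = {I ⊆ [n]×[d] : α(I) ∈ R} is the family of independent sets of a matroid on the ground set [n]×[d]: ∅ ∈ 𝕀; if I ∈ 𝕀 and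 J ⊆ I then J ∈ 𝕀; and if I, J ∈ 𝕀 with |I| > |J| then there exists an element e ∈ I \ J with J ∪ {e} ∈ 𝕀. -/
/-! The polymatroid exchange axiom applied to `α(J)` and `α(I)` yields `w ∈ R` raising some
coordinate `i` of `α(J)` while staying below `α(J) ∨ α(I)`, so `I` has more elements in row `i`
than `J`. Adding one of them to `J` gives a set whose multiplicity vector is still below `w`,
hence in `R` by downward closure. -/

open Finset

/-- For `I ⊆ [n]×[d]`, the multiplicity vector `α(I) ∈ ℕ^n` defined by
`α(I)_i = |{j : (i,j) ∈ I}|`. -/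
def multVec {n d : ℕ} (I : Finset (Fin n × Fin d)) : Fin n → ℕ :=
  fun i => (I.filter fun e => e.1 = i).card

section Polarization

variable {n d : ℕ}

theorem multVec_empty : multVec (∅ : Finset (Fin n × Fin d)) = 0 := by
  funext i
  simp [multVec]

theorem multVec_mono {I J : Finset (Fin n × Fin d)} (h : J ⊆ I) : multVec J ≤ multVec I :=
  fun _ => card_le_card (filter_subset_filter _ h)

theorem sum_multVec (I : Finset (Fin n × Fin d)) : ∑ i, multVec I i = I.card :=
  (card_eq_sum_card_fiberwise fun e _ => mem_univ e.1).symm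

theorem exists_mem_sdiff_fst_eq_of_multVec_lt {I J : Finset (Fin n × Fin d)} {i : Fin n}
    (h : multVec J i < multVec I i) : ∃ e ∈ I \ J, e.1 = i := by
  obtain ⟨e, heI, heJ⟩ := not_subset.mp fun hsub => (card_le_card hsub).not_gt h
  simp only [mem_filter] at heI heJ
  exact ⟨e, mem_sdiff.mpr ⟨heI.1, fun h => heJ ⟨h, heI.2⟩⟩, heI.2⟩

theorem multVec_insert_le {J : Finset (Fin n × Fin d)} {w : Fin n → ℕ} {e : Fin n × Fin d}
    (hJ : multVec J ≤ w) (he : multVec J e.1 < w e.1) : multVec (insert e J) ≤ w := by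
  intro i
  simp only [multVec, filter_insert]
  split_ifs with h
  · subst h
    exact (card_insert_le _ _).trans he
  · exact hJ i

theorem exists_mem_sdiff_multVec_insert_le {I J : Finset (Fin n × Fin d)} {w : Fin n → ℕ}
    (hJw : multVec J ≤ w) (hne : multVec J ≠ w) (hw : w ≤ multVec J ⊔ multVec I) :
    ∃ e ∈ I \ J, multVec (insert e J) ≤ w := by
  obtain ⟨i, hi⟩ : ∃ i, multVec J i < w i := by
    by_contra! h
    exact hne (le_antisymm hJw h)
  have hIi : multVec J i < multVec I i := by
    by_contra! h
    exact (hw i).trans (max_le le_rfl h) |>.not_gt hi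
  obtain ⟨e, he, rfl⟩ := exists_mem_sdiff_fst_eq_of_multVec_lt hIi
  exact ⟨e, he, multVec_insert_le hJw hi⟩

end Polarization

theorem polymatroid_polarization_matroid_general (n d : ℕ) (R : Set ((Fin n) → ℕ))
    (h0 : (fun _ => 0) ∈ R)
    (hdown : ∀ y ∈ R, ∀ x : Fin n → ℕ, (∀ i, x i ≤ y i) → x ∈ R)
    (hexch : ∀ x ∈ R, ∀ y ∈ R, (∑ i, x i) < (∑ i, y i) →
      ∃ w ∈ R, (∀ i, x i ≤ w i) ∧ x ≠ w ∧ (∀ i, w i ≤ max (x i) (y i))) :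
    (multVec (∅ : Finset (Fin n × Fin d)) ∈ R) ∧
    (∀ I : Finset (Fin n × Fin d), multVec I ∈ R →
      ∀ J ⊆ I, multVec J ∈ R) ∧
    (∀ I J : Finset (Fin n × Fin d), multVec I ∈ R → multVec J ∈ R →
      J.card < I.card → ∃ e ∈ I \ J, multVec (insert e J) ∈ R) := by
  refine ⟨multVec_empty ▸ h0, fun I hI J hJI => hdown _ hI _ (multVec_mono hJI), ?_⟩
  intro I J hI hJ hcard
  obtain ⟨w, hwR, hJw, hne, hw⟩ :=
    hexch _ hJ _ hI (by rwa [sum_multVec, sum_multVec])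
  obtain ⟨e, he, hew⟩ := exists_mem_sdiff_multVec_insert_le hJw hne hw
  exact ⟨e, he, hdown _ hwR _ hew⟩

/-- if `R ⊆ {α ∈ ℕ^n : α_i ≤ d}` is a discrete polymatroid, then
`𝕀 = {I ⊆ [n]×[d] : α(I) ∈ R}` is the family of independent sets of a matroid on the
ground set `[n]×[d]`: it contains the empty set, is downward closed, and satisfies the
independent set exchange axiom. -/
theorem polymatroid_polarization_matroid (n d : ℕ) (R : Set ((Fin n) → ℕ))
    (hbd : ∀ α ∈ R, ∀ i, α i ≤ d)
    (h0 : (fun _ => 0) ∈ R)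
    (hdown : ∀ y ∈ R, ∀ x : Fin n → ℕ, (∀ i, x i ≤ y i) → x ∈ R)
    (hexch : ∀ x ∈ R, ∀ y ∈ R, (∑ i, x i) < (∑ i, y i) →
      ∃ w ∈ R, (∀ i, x i ≤ w i) ∧ x ≠ w ∧ (∀ i, w i ≤ max (x i) (y i))) :
    (multVec (∅ : Finset (Fin n × Fin d)) ∈ R) ∧
    (∀ I : Finset (Fin n × Fin d), multVec I ∈ R →
      ∀ J ⊆ I, multVec J ∈ R) ∧
    (∀ I J : Finset (Fin n × Fin d), multVec I ∈ R → multVec J ∈ R →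
      J.card < I.card → ∃ e ∈ I \ J, multVec (insert e J) ∈ R) :=
  polymatroid_polarization_matroid_general n d R h0 hdown hexch
end

section
/- Consider a symmetric congestion game with n players and common strategy set P, temperature T ≥ 0, Gibbs distribution π(s) = e^{−T·Φ(s)}/Z, and relaxed logit dynamics kernel Q. For a strategy load profile α (α ∈ ℕ^P with Σ_p α_p = n), let S(α) = {s ∈ Pⁿ : z_p(s) = α_p for all p}, write Φ(α) for the common potential value of profiles in S(α), and π̄(α) = Σ_{x ∈ S(α)} π(x). Let α and β be adjacent load profiles with β = α − e_p + e_{p'} for distinct strategies p, p' ∈ P and α_p ≥ 1. Then: (a) Σ_{x ∈ S(α), y ∈ S(β)} π(x)·Q(x,y) = π̄(α) · (1/2) · (α_p/n) · e^{−T·Φ(β)} / Z'(α,p), where Z'(α,p) = Σ_{r ∈ P} e^{−T·Φ(α − e_p + e_r)}; and (b) consequently, for every x ∈ S(α) and y ∈ S(β) such that y is obtained from x by changing the strategy of a single player from p to p', one has Q(x,y) / Q̄(α,β) = 1/α_p ≥ 1/n, where Q̄(α,β) = π̄(α)^{−1} · Σ_{x ∈ S(α), y ∈ S(β)} π(x)·Q(x,y)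 is the projection-chain transition probability. -/
/-!
Swaps preserve strategy loads, so between the distinct load classes `S(α)` and
`S(β)`, `β = α − e_p + e_{p'}`, only single-player revisions contribute, and a revision
from `x ∈ S(α)` lands in `S(β)` exactly when a player on `p` moves to `p'`. Since the potential
factors through loads, each such move has the same probability `(1/2n)·e^{−T·Φ(β)}/Z'(α,p)`,
and every `x ∈ S(α)` has exactly `α_p` of them. Summing against `π` gives (a); dividing one
move by the resulting `Q̄(α,β)` gives `1/α_p`, and `α_p ≤ n` since `Σ α = n`.
-/

open Finset

section

variable {n : ℕ} {E : Type*} [Fintype E] [DecidableEq E]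

/-- A strategy profile of a symmetric congestion game with common strategy set
`P ⊆ 2^E`. -/
abbrev SymProfile (n : ℕ) {E : Type*} [DecidableEq E] (P : Finset (Finset E)) :=
  Fin n → {A : Finset E // A ∈ P}

variable {P : Finset (Finset E)}

/-- The load `ℓ_e(s)`: the number of players using resource `e` in profile `s`. -/
def sload (s : SymProfile n P) (e : E) : ℕ :=
  (Finset.univ.filter fun i => e ∈ (s i : Finset E)).card

/-- Rosenthal's potential `Φ(s) = Σ_{e ∈ E} Σ_{k=1}^{ℓ_e(s)} c_e(k)`. -/
noncomputable def sPhi (c : E → ℕ → ℝ) (s : SymProfile n P) : ℝ :=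
  ∑ e : E, ∑ k ∈ Finset.Icc 1 (sload s e), c e k

/-- The strategy load `z_p(s) = |{i : s_i = p}|`. -/
def zload (s : SymProfile n P) (p : {A : Finset E // A ∈ P}) : ℕ :=
  (Finset.univ.filter fun i => s i = p).card

/-- `S(α)`: the set of strategy profiles with strategy load profile `α`. -/
def profilesWithLoad (n : ℕ) (P : Finset (Finset E)) (α : {A : Finset E // A ∈ P} → ℕ) :
    Finset (SymProfile n P) :=
  Finset.univ.filter fun s => ∀ p, zload s p = α p

/-- `loadMove α p r = α − e_p + e_r` on strategy load profiles. -/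
def loadMove (α : {A : Finset E // A ∈ P} → ℕ) (p r : {A : Finset E // A ∈ P}) :
    {A : Finset E // A ∈ P} → ℕ :=
  fun l => α l + (if l = r then 1 else 0) - (if l = p then 1 else 0)

/-- The normalizing constant `Z_i(s_{−i}) = Σ_{r ∈ P} e^{−T·Φ(r, s_{−i})}`. -/
noncomputable def sZi (c : E → ℕ → ℝ) (T : ℝ) (s : SymProfile n P) (i : Fin n) : ℝ :=
  ∑ r : {A : Finset E // A ∈ P}, Real.exp (-T * sPhi c (Function.update s i r))

/-- The relaxed logit dynamics kernel. -/
noncomputable def relaxedLogitKernel (c : E → ℕ → ℝ) (T : ℝ)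
    (s t : SymProfile n P) : ℝ :=
  (1 / (2 * (n : ℝ) ^ 2)) *
      ((Finset.univ.filter fun ij : Fin n × Fin n => s ∘ Equiv.swap ij.1 ij.2 = t).card : ℝ)
    + (1 / (2 * (n : ℝ))) *
      ∑ i ∈ Finset.univ.filter fun i : Fin n => ∀ j, j ≠ i → t j = s j,
        Real.exp (-T * sPhi c t) / sZi c T s i

/-- The partition function `Z = Σ_t e^{−T·Φ(t)}`. -/
noncomputable def sZ (c : E → ℕ → ℝ) (T : ℝ) (n : ℕ) (P : Finset (Finset E)) : ℝ :=
  ∑ t : SymProfile n P, Real.exp (-T * sPhi c t)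

/-- The Gibbs distribution `π(s) = e^{−T·Φ(s)}/Z`. -/
noncomputable def sGibbs (c : E → ℕ → ℝ) (T : ℝ) (s : SymProfile n P) : ℝ :=
  Real.exp (-T * sPhi c s) / sZ c T n P

omit [Fintype E] in
theorem mem_profilesWithLoad {α : {A : Finset E // A ∈ P} → ℕ} {s : SymProfile n P} :
    s ∈ profilesWithLoad n P α ↔ ∀ q, zload s q = α q := by
  simp [profilesWithLoad]

omit [Fintype E] in
theorem zload_comp_perm (s : SymProfile n P) (σ : Equiv.Perm (Fin n))
    (q : {A : Finset E // A ∈ P}) : zload (s ∘ σ) q = zload s q := by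
  simp only [zload, card_filter, Function.comp_apply]
  exact Equiv.sum_comp σ fun i => if s i = q then 1 else 0

omit [Fintype E] in
theorem zload_add_of_eqOn_ne {x y : SymProfile n P} {i : Fin n}
    (h : ∀ j, j ≠ i → y j = x j) (q : {A : Finset E // A ∈ P}) :
    zload x q + (if y i = q then 1 else 0) = zload y q + (if x i = q then 1 else 0) := by
  have hsplit : ∀ s : SymProfile n P,
      zload s q = (∑ j ∈ univ.erase i, if s j = q then 1 else 0) + if s i = q then 1 else 0 :=
    fun s => by rw [zload, card_filter, sum_erase_add _ _ (mem_univ i)]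
  rw [hsplit x, hsplit y, sum_congr rfl fun j hj => by rw [← h j (ne_of_mem_erase hj)]]
  ring

omit [Fintype E] in
theorem update_mem_profilesWithLoad {α : {A : Finset E // A ∈ P} → ℕ} {x : SymProfile n P}
    (hx : x ∈ profilesWithLoad n P α) {i : Fin n} {p : {A : Finset E // A ∈ P}} (hxi : x i = p)
    (r : {A : Finset E // A ∈ P}) :
    Function.update x i r ∈ profilesWithLoad n P (loadMove α p r) := by
  refine mem_profilesWithLoad.mpr fun q => ?_
  have h := zload_add_of_eqOn_ne (i := i) (fun j hj => Function.update_of_ne hj r x) q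
  rw [mem_profilesWithLoad.mp hx, Function.update_self, hxi] at h
  simp only [loadMove, @eq_comm _ r q, @eq_comm _ p q] at h ⊢
  split_ifs at h ⊢ <;> omega

omit [Fintype E] in
theorem eqOn_ne_iff {α : {A : Finset E // A ∈ P} → ℕ} {p p' : {A : Finset E // A ∈ P}}
    (hpp' : p ≠ p') (hαp : 1 ≤ α p) {x y : SymProfile n P}
    (hx : x ∈ profilesWithLoad n P α) (hy : y ∈ profilesWithLoad n P (loadMove α p p'))
    (i : Fin n) :
    (∀ j, j ≠ i → y j = x j) ↔ x i = p ∧ Function.update x i p' = y := by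
  constructor
  · intro h
    have hp := zload_add_of_eqOn_ne h p
    have hp' := zload_add_of_eqOn_ne h p'
    simp only [mem_profilesWithLoad.mp hx, mem_profilesWithLoad.mp hy, loadMove, if_neg hpp',
      if_neg (Ne.symm hpp'), ↓reduceIte] at hp hp'
    have hyi : y i = p' := by
      by_contra hne
      simp only [hne, if_false] at hp'
      split_ifs at hp' <;> omega
    have hxi : x i = p := by
      by_contra hne
      simp only [hne, hyi, Ne.symm hpp', if_false] at hp
      omega
    exact ⟨hxi, Function.update_eq_iff.mpr ⟨hyi.symm, fun j hj => (h j hj).symm⟩⟩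
  · rintro ⟨-, rfl⟩ j hj
    exact Function.update_of_ne hj p' x

omit [Fintype E] in
/-- The probability that a revising player on `p` picks `r` when the load profile is `α`. -/
noncomputable def loadLogitProb (PhiL : ({A : Finset E // A ∈ P} → ℕ) → ℝ) (T : ℝ)
    (α : {A : Finset E // A ∈ P} → ℕ) (p r : {A : Finset E // A ∈ P}) : ℝ :=
  Real.exp (-T * PhiL (loadMove α p r))
    / ∑ r' : {A : Finset E // A ∈ P}, Real.exp (-T * PhiL (loadMove α p r'))

omit [Fintype E] in
theorem loadLogitProb_pos (PhiL : ({A : Finset E // A ∈ P} → ℕ) → ℝ) (T : ℝ)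
    (α : {A : Finset E // A ∈ P} → ℕ) (p r : {A : Finset E // A ∈ P}) :
    0 < loadLogitProb PhiL T α p r :=
  div_pos (Real.exp_pos _) (sum_pos (fun _ _ => Real.exp_pos _) ⟨p, mem_univ p⟩)

section Kernel

variable {c : E → ℕ → ℝ} {T : ℝ} {PhiL : ({A : Finset E // A ∈ P} → ℕ) → ℝ}
  {α : {A : Finset E // A ∈ P} → ℕ} {p p' : {A : Finset E // A ∈ P}}

theorem sZi_eq_of_mem (hPhiL : ∀ γ : {A : Finset E // A ∈ P} → ℕ, ∀ s : SymProfile n P,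
      (∀ q, zload s q = γ q) → sPhi c s = PhiL γ)
    {x : SymProfile n P} (hx : x ∈ profilesWithLoad n P α) {i : Fin n} (hxi : x i = p) :
    sZi c T x i = ∑ r : {A : Finset E // A ∈ P}, Real.exp (-T * PhiL (loadMove α p r)) :=
  sum_congr rfl fun r _ => by
    rw [hPhiL _ _ (mem_profilesWithLoad.mp (update_mem_profilesWithLoad hx hxi r))]

theorem relaxedLogitKernel_eq_of_mem (hPhiL : ∀ γ : {A : Finset E // A ∈ P} → ℕ,
      ∀ s : SymProfile n P, (∀ q, zload s q = γ q) → sPhi c s = PhiL γ)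
    (hpp' : p ≠ p') (hαp : 1 ≤ α p) {x y : SymProfile n P}
    (hx : x ∈ profilesWithLoad n P α) (hy : y ∈ profilesWithLoad n P (loadMove α p p')) :
    relaxedLogitKernel c T x y = 1 / (2 * (n : ℝ))
      * #{i ∈ univ.filter (x · = p) | Function.update x i p' = y}
      * loadLogitProb PhiL T α p p' := by
  have hswap : (univ.filter fun ij : Fin n × Fin n => x ∘ Equiv.swap ij.1 ij.2 = y) = ∅ := by
    refine filter_eq_empty_iff.mpr fun ij _ hxy => ?_
    have h := zload_comp_perm x (Equiv.swap ij.1 ij.2) p'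
    rw [hxy, mem_profilesWithLoad.mp hx, mem_profilesWithLoad.mp hy] at h
    simp [loadMove, Ne.symm hpp'] at h
  have hmoves : (univ.filter fun i : Fin n => ∀ j, j ≠ i → y j = x j)
      = {i ∈ univ.filter (x · = p) | Function.update x i p' = y} := by
    rw [filter_filter]
    exact filter_congr fun i _ => eqOn_ne_iff hpp' hαp hx hy i
  rw [relaxedLogitKernel, hswap, hmoves, card_empty, Nat.cast_zero, mul_zero, zero_add,
    sum_congr rfl fun i hi => ?_, sum_const, nsmul_eq_mul, ← mul_assoc]
  have hxi : x i = p := (mem_filter.mp (mem_filter.mp hi).1).2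
  rw [sZi_eq_of_mem hPhiL hx hxi, hPhiL _ _ (mem_profilesWithLoad.mp hy), loadLogitProb]

theorem sum_relaxedLogitKernel_of_mem (hPhiL : ∀ γ : {A : Finset E // A ∈ P} → ℕ,
      ∀ s : SymProfile n P, (∀ q, zload s q = γ q) → sPhi c s = PhiL γ)
    (hpp' : p ≠ p') (hαp : 1 ≤ α p) {x : SymProfile n P} (hx : x ∈ profilesWithLoad n P α) :
    ∑ y ∈ profilesWithLoad n P (loadMove α p p'), relaxedLogitKernel c T x y
      = 1 / (2 * (n : ℝ)) * α p * loadLogitProb PhiL T α p p' := by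
  have hmaps : ((univ.filter (x · = p) : Finset (Fin n)) : Set (Fin n)).MapsTo
      (fun i => Function.update x i p') (profilesWithLoad n P (loadMove α p p')) :=
    fun i hi => update_mem_profilesWithLoad hx (mem_filter.mp hi).2 p'
  rw [sum_congr rfl fun y hy => relaxedLogitKernel_eq_of_mem hPhiL hpp' hαp hx hy, ← sum_mul,
    ← mul_sum, ← Nat.cast_sum, ← card_eq_sum_card_fiberwise hmaps, ← zload,
    mem_profilesWithLoad.mp hx p]

theorem relaxedLogitKernel_update (hPhiL : ∀ γ : {A : Finset E // A ∈ P} → ℕ,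
      ∀ s : SymProfile n P, (∀ q, zload s q = γ q) → sPhi c s = PhiL γ)
    (hpp' : p ≠ p') (hαp : 1 ≤ α p) {x : SymProfile n P} (hx : x ∈ profilesWithLoad n P α)
    {i : Fin n} (hxi : x i = p) :
    relaxedLogitKernel c T x (Function.update x i p')
      = 1 / (2 * (n : ℝ)) * loadLogitProb PhiL T α p p' := by
  have hmover : {j ∈ univ.filter (x · = p) | Function.update x j p' = Function.update x i p'}
      = {i} := by
    refine eq_singleton_iff_unique_mem.mpr ⟨by simp [hxi], fun j hj => by_contra fun hji => ?_⟩
    have h := congrFun (mem_filter.mp hj).2 i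
    rw [Function.update_of_ne (Ne.symm hji), Function.update_self, hxi] at h
    exact hpp' h
  rw [relaxedLogitKernel_eq_of_mem hPhiL hpp' hαp hx (update_mem_profilesWithLoad hx hxi p'),
    hmover, card_singleton, Nat.cast_one, mul_one]

theorem sum_sum_sGibbs_mul_relaxedLogitKernel (hPhiL : ∀ γ : {A : Finset E // A ∈ P} → ℕ,
      ∀ s : SymProfile n P, (∀ q, zload s q = γ q) → sPhi c s = PhiL γ)
    (hpp' : p ≠ p') (hαp : 1 ≤ α p) :
    ∑ x ∈ profilesWithLoad n P α, ∑ y ∈ profilesWithLoad n P (loadMove α p p'),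
        sGibbs c T x * relaxedLogitKernel c T x y
      = (∑ x ∈ profilesWithLoad n P α, sGibbs c T x)
          * (1 / (2 * (n : ℝ)) * α p * loadLogitProb PhiL T α p p') := by
  simp_rw [← mul_sum]
  rw [sum_mul]
  exact sum_congr rfl fun x hx => by rw [sum_relaxedLogitKernel_of_mem hPhiL hpp' hαp hx]

end Kernel

theorem relaxedLogit_projection_chain_general
    (c : E → ℕ → ℝ) (T : ℝ)
    (PhiL : ({A : Finset E // A ∈ P} → ℕ) → ℝ)
    (hPhiL : ∀ γ : {A : Finset E // A ∈ P} → ℕ, ∀ s : SymProfile n P,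
      (∀ p, zload s p = γ p) → sPhi c s = PhiL γ)
    (α : {A : Finset E // A ∈ P} → ℕ) (hα : (∑ p, α p) = n)
    (p p' : {A : Finset E // A ∈ P}) (hpp' : p ≠ p') (hαp : 1 ≤ α p)
    (β : {A : Finset E // A ∈ P} → ℕ) (hβ : β = loadMove α p p') :
    (∑ x ∈ profilesWithLoad n P α, ∑ y ∈ profilesWithLoad n P β,
        sGibbs c T x * relaxedLogitKernel c T x y
      = (∑ x ∈ profilesWithLoad n P α, sGibbs c T x) * (1 / 2) * ((α p : ℝ) / (n : ℝ))
          * Real.exp (-T * PhiL β)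
          / (∑ r : {A : Finset E // A ∈ P}, Real.exp (-T * PhiL (loadMove α p r)))) ∧
    (∀ x ∈ profilesWithLoad n P α, ∀ y ∈ profilesWithLoad n P β,
      ∀ i : Fin n, x i = p → y = Function.update x i p' →
        relaxedLogitKernel c T x y
            / ((∑ x' ∈ profilesWithLoad n P α, sGibbs c T x')⁻¹
              * ∑ x' ∈ profilesWithLoad n P α, ∑ y' ∈ profilesWithLoad n P β,
                  sGibbs c T x' * relaxedLogitKernel c T x' y')
          = 1 / (α p : ℝ) ∧
        (1 : ℝ) / (n : ℝ) ≤ 1 / (α p : ℝ)) := by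
  subst hβ
  have hαp_le : α p ≤ n := hα ▸ single_le_sum (fun _ _ => Nat.zero_le _) (mem_univ p)
  have hαp_pos : (0 : ℝ) < α p := by exact_mod_cast hαp
  have hn_pos : (0 : ℝ) < n := by exact_mod_cast hαp.trans hαp_le
  have hw_pos := loadLogitProb_pos PhiL T α p p'
  rw [sum_sum_sGibbs_mul_relaxedLogitKernel hPhiL hpp' hαp]
  refine ⟨by rw [loadLogitProb]; ring, ?_⟩
  rintro x hx y - i hxi rfl
  have hZ_pos : 0 < sZ c T n P := sum_pos (fun _ _ => Real.exp_pos _) ⟨x, mem_univ x⟩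
  have hπ_pos : 0 < ∑ x' ∈ profilesWithLoad n P α, sGibbs c T x' :=
    sum_pos (fun _ _ => div_pos (Real.exp_pos _) hZ_pos) ⟨x, hx⟩
  rw [relaxedLogitKernel_update hPhiL hpp' hαp hx hxi]
  exact ⟨by field_simp, one_div_le_one_div_of_le hαp_pos (by exact_mod_cast hαp_le)⟩

/-- projection chain transition probabilities of the relaxed logit
dynamics between adjacent strategy load profiles `α` and `β = α − e_p + e_{p'}`:
(a) `Σ_{x ∈ S(α), y ∈ S(β)} π(x)·Q(x,y) = π̄(α)·(1/2)·(α_p/n)·e^{−T·Φ(β)}/Z'(α,p)`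
where `Z'(α,p) = Σ_{r ∈ P} e^{−T·Φ(α − e_p + e_r)}`; and (b) for every `x ∈ S(α)` and
`y ∈ S(β)` obtained from `x` by changing a single player's strategy from `p` to `p'`,
`Q(x,y)/Q̄(α,β) = 1/α_p ≥ 1/n`. -/
theorem relaxedLogit_projection_chain
    (hn : 0 < n) (hP : P.Nonempty) (c : E → ℕ → ℝ) (T : ℝ) (hT : 0 ≤ T)
    (PhiL : ({A : Finset E // A ∈ P} → ℕ) → ℝ)
    (hPhiL : ∀ γ : {A : Finset E // A ∈ P} → ℕ, ∀ s : SymProfile n P,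
      (∀ p, zload s p = γ p) → sPhi c s = PhiL γ)
    (α : {A : Finset E // A ∈ P} → ℕ) (hα : (∑ p, α p) = n)
    (p p' : {A : Finset E // A ∈ P}) (hpp' : p ≠ p') (hαp : 1 ≤ α p)
    (β : {A : Finset E // A ∈ P} → ℕ) (hβ : β = loadMove α p p') :
    (∑ x ∈ profilesWithLoad n P α, ∑ y ∈ profilesWithLoad n P β,
        sGibbs c T x * relaxedLogitKernel c T x y
      = (∑ x ∈ profilesWithLoad n P α, sGibbs c T x) * (1 / 2) * ((α p : ℝ) / (n : ℝ))
          * Real.exp (-T * PhiL β)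
          / (∑ r : {A : Finset E // A ∈ P}, Real.exp (-T * PhiL (loadMove α p r)))) ∧
    (∀ x ∈ profilesWithLoad n P α, ∀ y ∈ profilesWithLoad n P β,
      ∀ i : Fin n, x i = p → y = Function.update x i p' →
        relaxedLogitKernel c T x y
            / ((∑ x' ∈ profilesWithLoad n P α, sGibbs c T x')⁻¹
              * ∑ x' ∈ profilesWithLoad n P α, ∑ y' ∈ profilesWithLoad n P β,
                  sGibbs c T x' * relaxedLogitKernel c T x' y')
          = 1 / (α p : ℝ) ∧
        (1 : ℝ) / (n : ℝ) ≤ 1 / (α p : ℝ)) :=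
  relaxedLogit_projection_chain_general c T PhiL hPhiL α hα p p' hpp' hαp β hβ

end
end
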